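/- Let A be a weakly idempotent complete exact category with enough projectives and injectives, and let (C, W, F) be a hereditary Hovey triple in A. Then W ∩ F_n = (W ∩ F)_n for every integer n ≥ 0. -/

import Mathlib

open CategoryTheory CategoryTheory.Limits

universe w v u v₁ u₁ v₂ u₂ v₃ u₃

namespace CotorsionPaper

variable {A : Type u} [Category.{v} A] [Preadditive A]

/-- The data of an exact structure on an additive category: a distinguished class of
kernel-cokernel pairs, called conflations. -/
structure ExactStruct (A : Type u) [Category.{v} A] [Preadditive A] where
  /-- `IsConflation f g` means that `X ↣ Y ↠ Z` (via `f`, `g`) is a conflation. -/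
  IsConflation : ∀ ⦃X Y Z : A⦄, (X ⟶ Y) → (Y ⟶ Z) → Prop

namespace ExactStruct

variable (E : ExactStruct A)

/-- A morphism is an inflation if it is the first map of some conflation. -/
def Inflation {X Y : A} (f : X ⟶ Y) : Prop :=
  ∃ (Z : A) (g : Y ⟶ Z), E.IsConflation f g

/-- A morphism is a deflation if it is the second map of some conflation. -/
def Deflation {Y Z : A} (g : Y ⟶ Z) : Prop :=
  ∃ (X : A) (f : X ⟶ Y), E.IsConflation f g

/-- Quillen's axioms for an exact category (in Bühler's formulation). -/
structure IsExactCategory : Prop where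
  comp_zero : ∀ ⦃X Y Z : A⦄ ⦃f : X ⟶ Y⦄ ⦃g : Y ⟶ Z⦄, E.IsConflation f g → f ≫ g = 0
  isKernel : ∀ ⦃X Y Z : A⦄ ⦃f : X ⟶ Y⦄ ⦃g : Y ⟶ Z⦄ (h : E.IsConflation f g),
    Nonempty (IsLimit (KernelFork.ofι f (comp_zero h)))
  isCokernel : ∀ ⦃X Y Z : A⦄ ⦃f : X ⟶ Y⦄ ⦃g : Y ⟶ Z⦄ (h : E.IsConflation f g),
    Nonempty (IsColimit (CokernelCofork.ofπ g (comp_zero h)))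
  conflation_of_iso : ∀ ⦃X Y Z X' Y' Z' : A⦄ ⦃f : X ⟶ Y⦄ ⦃g : Y ⟶ Z⦄
    (eX : X ≅ X') (eY : Y ≅ Y') (eZ : Z ≅ Z') ⦃f' : X' ⟶ Y'⦄ ⦃g' : Y' ⟶ Z'⦄,
    E.IsConflation f g → eX.hom ≫ f' = f ≫ eY.hom → eY.hom ≫ g' = g ≫ eZ.hom →
    E.IsConflation f' g'
  id_inflation : ∀ X : A, E.Inflation (𝟙 X)
  id_deflation : ∀ X : A, E.Deflation (𝟙 X)
  inflation_comp : ∀ ⦃X Y Z : A⦄ ⦃f : X ⟶ Y⦄ ⦃g : Y ⟶ Z⦄,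
    E.Inflation f → E.Inflation g → E.Inflation (f ≫ g)
  deflation_comp : ∀ ⦃X Y Z : A⦄ ⦃f : X ⟶ Y⦄ ⦃g : Y ⟶ Z⦄,
    E.Deflation f → E.Deflation g → E.Deflation (f ≫ g)
  inflation_pushout : ∀ ⦃X Y X' : A⦄ ⦃f : X ⟶ Y⦄ (u : X ⟶ X'), E.Inflation f →
    ∃ (Y' : A) (f' : X' ⟶ Y') (v : Y ⟶ Y'), E.Inflation f' ∧ IsPushout f u v f'
  deflation_pullback : ∀ ⦃Y Z Z' : A⦄ ⦃g : Y ⟶ Z⦄ (u : Z' ⟶ Z), E.Deflation g →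
    ∃ (Y' : A) (g' : Y' ⟶ Z') (v : Y' ⟶ Y), E.Deflation g' ∧ IsPullback g' v u g

end ExactStruct

/-- An additive category is weakly idempotent complete if every split monomorphism
has a cokernel. -/
def WIC (A : Type u) [Category.{v} A] [Preadditive A] : Prop :=
  ∀ ⦃X Y : A⦄ (f : X ⟶ Y), (∃ r : Y ⟶ X, f ≫ r = 𝟙 X) → HasCokernel f

namespace ExactStruct

variable (E : ExactStruct A)

/-- An object is projective (relative to the exact structure) if maps out of it lift
along deflations. -/
def ProjObj (P : A) : Prop :=
  ∀ ⦃Y Z : A⦄ ⦃g : Y ⟶ Z⦄, E.Deflation g → ∀ h : P ⟶ Z, ∃ l : P ⟶ Y, l ≫ g = h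

/-- An object is injective (relative to the exact structure) if maps into it extend
along inflations. -/
def InjObj (I : A) : Prop :=
  ∀ ⦃X Y : A⦄ ⦃f : X ⟶ Y⦄, E.Inflation f → ∀ h : X ⟶ I, ∃ l : Y ⟶ I, f ≫ l = h

/-- The exact category has enough projectives: every object admits a deflation from
a projective object. -/
def EnoughProjectives : Prop :=
  ∀ M : A, ∃ (K P : A) (f : K ⟶ P) (g : P ⟶ M), E.ProjObj P ∧ E.IsConflation f g

/-- The exact category has enough injectives. -/
def EnoughInjectives : Prop :=
  ∀ M : A, ∃ (I C : A) (f : M ⟶ I) (g : I ⟶ C), E.InjObj I ∧ E.IsConflation f g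

/-- `Ext¹(M, Y) = 0`: every conflation `Y ↣ Eo ↠ M` splits. -/
def Ext1Zero (M Y : A) : Prop :=
  ∀ ⦃Eo : A⦄ ⦃f : Y ⟶ Eo⦄ ⦃g : Eo ⟶ M⦄, E.IsConflation f g → ∃ s : M ⟶ Eo, s ≫ g = 𝟙 M

end ExactStruct

/-- `ExtZero E n M Y` means `Extⁿ(M, Y) = 0` (defined by dimension shifting along
projective presentations; the value at `n = 0` is irrelevant and set to `True`). -/
def ExtZero (E : ExactStruct A) : ℕ → A → A → Prop
  | 0, _, _ => True
  | 1, M, Y => E.Ext1Zero M Y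
  | (n + 2), M, Y => ∀ ⦃K P : A⦄ ⦃f : K ⟶ P⦄ ⦃g : P ⟶ M⦄,
      E.ProjObj P → E.IsConflation f g → ExtZero E (n + 1) K Y

namespace ExactStruct

variable (E : ExactStruct A)

/-- The right Ext-orthogonal of a class of objects. -/
def rightPerp (X : Set A) : Set A := {M | ∀ C ∈ X, E.Ext1Zero C M}

/-- The left Ext-orthogonal of a class of objects. -/
def leftPerp (Y : Set A) : Set A := {M | ∀ L ∈ Y, E.Ext1Zero M L}

end ExactStruct

/-- `SyzOf E X n K M` : `K` is an `n`-th syzygy of `M`, i.e. there is an acyclic sequence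
`K ↣ X_{n-1} → ⋯ → X_0 ↠ M` with all middle terms in `X`. -/
def SyzOf (E : ExactStruct A) (X : Set A) : ℕ → A → A → Prop
  | 0, K, M => Nonempty (K ≅ M)
  | (n + 1), K, M => ∃ (K' X0 : A) (f : K' ⟶ X0) (g : X0 ⟶ M),
      X0 ∈ X ∧ E.IsConflation f g ∧ SyzOf E X n K K'

/-- `CosyzOf E Y n C M` : `C` is an `n`-th cosyzygy of `M` with respect to `Y`. -/
def CosyzOf (E : ExactStruct A) (Y : Set A) : ℕ → A → A → Prop
  | 0, C, M => Nonempty (M ≅ C)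
  | (n + 1), C, M => ∃ (C' Y0 : A) (f : M ⟶ Y0) (g : Y0 ⟶ C'),
      Y0 ∈ Y ∧ E.IsConflation f g ∧ CosyzOf E Y n C C'

namespace ExactStruct

variable (E : ExactStruct A)

/-- There is an acyclic sequence `X_n ↣ X_{n-1} → ⋯ → X_0 ↠ M` with all `X_i ∈ X`. -/
def pdLE (X : Set A) (n : ℕ) (M : A) : Prop := ∃ K, K ∈ X ∧ SyzOf E X n K M

/-- The `X`-projective dimension of `M`, valued in `ℕ∞`. -/
noncomputable def pdim (X : Set A) (M : A) : ℕ∞ :=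
  sInf ((fun m : ℕ => (m : ℕ∞)) '' {m : ℕ | E.pdLE X m M})

/-- `X_n`: the class of objects of `X`-projective dimension at most `n`. -/
def pdSet (X : Set A) (n : ℕ) : Set A := {M | E.pdim X M ≤ (n : ℕ∞)}

/-- There is an acyclic sequence `M ↣ Y^0 → ⋯ → Y^{n-1} ↠ Y^n` with all `Y^i ∈ Y`. -/
def idLE (Y : Set A) (n : ℕ) (M : A) : Prop := ∃ C, C ∈ Y ∧ CosyzOf E Y n C M

/-- The `Y`-injective dimension of `M`, valued in `ℕ∞`. -/
noncomputable def idim (Y : Set A) (M : A) : ℕ∞ :=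
  sInf ((fun m : ℕ => (m : ℕ∞)) '' {m : ℕ | E.idLE Y m M})

/-- `Y_n`: the class of objects of `Y`-injective dimension at most `n`. -/
def idSet (Y : Set A) (n : ℕ) : Set A := {M | E.idim Y M ≤ (n : ℕ∞)}

/-- `(X, Y)` is a cotorsion pair. -/
def IsCotorsionPair (X Y : Set A) : Prop :=
  E.rightPerp X = Y ∧ E.leftPerp Y = X

/-- `(X, Y)` is a complete cotorsion pair. -/
def IsCompleteCP (X Y : Set A) : Prop :=
  E.IsCotorsionPair X Y ∧
  (∀ M : A, ∃ (Y' X' : A) (f : Y' ⟶ X') (g : X' ⟶ M),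
    Y' ∈ Y ∧ X' ∈ X ∧ E.IsConflation f g) ∧
  (∀ M : A, ∃ (Y'' X'' : A) (f : M ⟶ Y'') (g : Y'' ⟶ X''),
    Y'' ∈ Y ∧ X'' ∈ X ∧ E.IsConflation f g)

/-- Heredity conditions: `X` is closed under kernels of deflations and `Y` is closed
under cokernels of inflations. -/
def HereditaryClasses (X Y : Set A) : Prop :=
  (∀ ⦃K B C : A⦄ ⦃f : K ⟶ B⦄ ⦃g : B ⟶ C⦄,
    E.IsConflation f g → B ∈ X → C ∈ X → K ∈ X) ∧
  (∀ ⦃K B C : A⦄ ⦃f : K ⟶ B⦄ ⦃g : B ⟶ C⦄,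
    E.IsConflation f g → K ∈ Y → B ∈ Y → C ∈ Y)

/-- `W` is a thick class: closed under direct summands and two-out-of-three
in conflations. -/
def IsThick (W : Set A) : Prop :=
  (∀ ⦃M N : A⦄ (s : M ⟶ N) (r : N ⟶ M), s ≫ r = 𝟙 M → N ∈ W → M ∈ W) ∧
  (∀ ⦃X Y Z : A⦄ ⦃f : X ⟶ Y⦄ ⦃g : Y ⟶ Z⦄, E.IsConflation f g →
    ((X ∈ W → Y ∈ W → Z ∈ W) ∧ (X ∈ W → Z ∈ W → Y ∈ W) ∧ (Y ∈ W → Z ∈ W → X ∈ W)))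

/-- `(C, W, F)` is a Hovey triple. -/
def IsHoveyTriple (C W F : Set A) : Prop :=
  E.IsCompleteCP (C ∩ W) F ∧ E.IsCompleteCP C (W ∩ F) ∧ E.IsThick W

/-- `(C, W, F)` is a hereditary Hovey triple. -/
def IsHereditaryHoveyTriple (C W F : Set A) : Prop :=
  E.IsHoveyTriple C W F ∧ E.HereditaryClasses (C ∩ W) F ∧ E.HereditaryClasses C (W ∩ F)

/-- A complete cotorsion pair `(X, Y)` is left extendable if `(X_n, X_n^⊥)` is a
complete cotorsion pair for every `n ≥ 0`. -/
def LeftExtendable (X Y : Set A) : Prop :=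
  E.IsCompleteCP X Y ∧
  ∀ n : ℕ, E.IsCompleteCP (E.pdSet X n) (E.rightPerp (E.pdSet X n))

/-- A complete cotorsion pair `(X, Y)` is right extendable if `(⊥(Y_n), Y_n)` is a
complete cotorsion pair for every `n ≥ 0`. -/
def RightExtendable (X Y : Set A) : Prop :=
  E.IsCompleteCP X Y ∧
  ∀ n : ℕ, E.IsCompleteCP (E.leftPerp (E.idSet Y n)) (E.idSet Y n)

/-- The class `Y` is the right Ext-orthogonal of a set (i.e. small family) of objects. -/
def SetGenerated (Y : Set A) : Prop :=
  ∃ (ι : Type v) (G : ι → A), Y = {M | ∀ i, E.Ext1Zero (G i) M}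

/-- Trivial cofibrations of the exact model structure associated to a Hovey triple:
inflations with cokernel in `C ∩ W`. -/
def TrivCof (C W : Set A) : MorphismProperty A := fun X Y f =>
  ∃ (Z : A) (g : Y ⟶ Z), E.IsConflation f g ∧ Z ∈ C ∩ W

/-- Trivial fibrations: deflations with kernel in `W ∩ F`. -/
def TrivFib (W F : Set A) : MorphismProperty A := fun Y Z g =>
  ∃ (K : A) (f : K ⟶ Y), E.IsConflation f g ∧ K ∈ W ∩ F

/-- Weak equivalences of the exact model structure associated to a Hovey triple. -/
def WeakEquiv (C W F : Set A) : MorphismProperty A := fun X Y f =>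
  ∃ (Z : A) (i : X ⟶ Z) (p : Z ⟶ Y), E.TrivCof C W i ∧ E.TrivFib W F p ∧ i ≫ p = f

/-- The homotopy category of the exact model structure associated to the Hovey triple
`(C, W, F)`: the localization of `A` at the weak equivalences. -/
abbrev Ho (C W F : Set A) := (E.WeakEquiv C W F).Localization

end ExactStruct

/-- The full subcategory on a class of objects. -/
abbrev SubCat (S : Set A) := ObjectProperty.FullSubcategory (fun X : A => X ∈ S)

/-- The stable relation: two maps are identified if their difference factors through
an object of `P`. -/
def stableRel (S P : Set A) : HomRel (SubCat S) := fun X Y f g =>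
  ∃ (Q : A) (u : X.obj ⟶ Q) (v : Q ⟶ Y.obj),
    Q ∈ P ∧ (f.hom : X.obj ⟶ Y.obj) - (g.hom : X.obj ⟶ Y.obj) = u ≫ v

/-- The stable category of the full subcategory on `S`, modulo maps factoring through
objects of `P`. -/
abbrev StableCat (S P : Set A) := CategoryTheory.Quotient (stableRel S P)

namespace ExactStruct

variable (E : ExactStruct A)

/-- `P0` is a projective object of the full exact subcategory on `S`. -/
def SubProjObj (S : Set A) (P0 : A) : Prop :=
  P0 ∈ S ∧ ∀ ⦃X Y Z : A⦄ ⦃f : X ⟶ Y⦄ ⦃g : Y ⟶ Z⦄,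
    E.IsConflation f g → X ∈ S → Y ∈ S → Z ∈ S →
    ∀ h : P0 ⟶ Z, ∃ l : P0 ⟶ Y, l ≫ g = h

/-- `I0` is an injective object of the full exact subcategory on `S`. -/
def SubInjObj (S : Set A) (I0 : A) : Prop :=
  I0 ∈ S ∧ ∀ ⦃X Y Z : A⦄ ⦃f : X ⟶ Y⦄ ⦃g : Y ⟶ Z⦄,
    E.IsConflation f g → X ∈ S → Y ∈ S → Z ∈ S →
    ∀ h : X ⟶ I0, ∃ l : Y ⟶ I0, f ≫ l = h

/-- The full exact subcategory on `S` is a Frobenius category whose class of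
projective-injective objects is `P`. -/
def IsFrobeniusSub (S P : Set A) : Prop :=
  (∀ Q0 : A, E.SubProjObj S Q0 ↔ Q0 ∈ S ∩ P) ∧
  (∀ Q0 : A, E.SubInjObj S Q0 ↔ Q0 ∈ S ∩ P) ∧
  (∀ M ∈ S, ∃ (K Q0 : A) (f : K ⟶ Q0) (g : Q0 ⟶ M),
    K ∈ S ∧ Q0 ∈ P ∧ E.IsConflation f g) ∧
  (∀ M ∈ S, ∃ (Q0 C0 : A) (f : M ⟶ Q0) (g : Q0 ⟶ C0),
    C0 ∈ S ∧ Q0 ∈ P ∧ E.IsConflation f g)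

end ExactStruct

/-- The canonical exact structure of an abelian category: conflations are the short
exact sequences. -/
def abelianES (A : Type u) [Category.{v} A] [Abelian A] : ExactStruct A where
  IsConflation X Y Z f g :=
    ∃ w : f ≫ g = 0, Mono f ∧ Epi g ∧ (ShortComplex.mk f g w).Exact

/-- A recollement (at the level of plain categories) of `T₂` relative to `T₁` and `T₃`. -/
structure Recollement (T₁ : Type u₁) (T₂ : Type u₂) (T₃ : Type u₃)
    [Category.{v₁} T₁] [Category.{v₂} T₂] [Category.{v₃} T₃] where
  i : T₁ ⥤ T₂
  iStar : T₂ ⥤ T₁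
  iShriek : T₂ ⥤ T₁
  j : T₂ ⥤ T₃
  jShriek : T₃ ⥤ T₂
  jStar : T₃ ⥤ T₂
  adj₁ : iStar ⊣ i
  adj₂ : i ⊣ iShriek
  adj₃ : jShriek ⊣ j
  adj₄ : j ⊣ jStar
  i_ff : i.FullyFaithful
  jShriek_ff : jShriek.FullyFaithful
  jStar_ff : jStar.FullyFaithful
  ker : ∀ X : T₂, Limits.IsZero (j.obj X) ↔ ∃ Y : T₁, Nonempty (X ≅ i.obj Y)

section Presentable

/-- A preorder is `λ`-directed if every subset of cardinality `< λ` has an upper bound. -/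
def IsLamDirected (lam : Cardinal.{v}) (J : Type v) [Preorder J] : Prop :=
  ∀ s : Set J, Cardinal.mk s < lam → ∃ u : J, ∀ j ∈ s, j ≤ u

/-- An object `X` is `λ`-presentable if `Hom(X, −)` preserves `λ`-directed colimits. -/
def IsPresentableObj (lam : Cardinal.{v}) (X : A) : Prop :=
  ∀ (J : Type v) [Preorder J], IsLamDirected lam J →
    ∀ (D : J ⥤ A) (c : Cocone D), IsColimit c →
      (∀ f : X ⟶ c.pt, ∃ (j : J) (g : X ⟶ D.obj j), g ≫ c.ι.app j = f) ∧
      (∀ (j j' : J) (g : X ⟶ D.obj j) (g' : X ⟶ D.obj j'),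
        g ≫ c.ι.app j = g' ≫ c.ι.app j' →
        ∃ (l : J) (hj : j ≤ l) (hj' : j' ≤ l),
          g ≫ D.map (homOfLE hj) = g' ≫ D.map (homOfLE hj'))

/-- `X` is a `λ`-directed colimit of objects isomorphic to members of the family `G`. -/
def IsLamDirColimitOf (lam : Cardinal.{v}) {ι : Type v} (G : ι → A) (X : A)
    (J : Type v) [Preorder J] : Prop :=
  IsLamDirected lam J ∧
  ∃ (D : J ⥤ A) (c : Cocone D), Nonempty (IsColimit c) ∧ Nonempty (c.pt ≅ X) ∧
    ∀ j : J, ∃ i : ι, Nonempty (D.obj j ≅ G i)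

/-- The category `A` is `λ`-accessible. -/
def IsAccessibleCat (A : Type u) [Category.{v} A] (lam : Cardinal.{v}) : Prop :=
  Cardinal.IsRegular lam ∧
  ∃ (ι : Type v) (G : ι → A),
    (∀ i, IsPresentableObj lam (G i)) ∧
    ∀ X : A, ∃ (J : Type v) (instJ : Preorder J),
      @IsLamDirColimitOf A _ lam ι G X J instJ

/-- The category `A` is locally presentable: cocomplete and accessible. -/
def IsLocallyPresentableCat (A : Type u) [Category.{v} A] : Prop :=
  HasColimitsOfSize.{v, v} A ∧ ∃ lam : Cardinal.{v}, IsAccessibleCat A lam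

end Presentable

end CotorsionPaper

/-!
Let `M ∈ W` have `F`-injective dimension at most `n`. The complete cotorsion pair
`(C, W ∩ F)` gives a conflation `M ↣ T ↠ M'` with `T ∈ W ∩ F`. Thickness puts `M'` in `W`,
and dimension shifting along `F` shows that `M'` has `F`-injective dimension at most `n - 1`,
so induction yields a `(W ∩ F)`-coresolution of `M` of length `n`. Conversely, a
`(W ∩ F)`-coresolution is an `F`-coresolution, and it forces `M ∈ W` by thickness.

Dimension shifting compares the cosyzygies of two conflations `M ↣ A₁ ↠ A₂`, `M ↣ B₁ ↠ B₂`
with `A₁, B₁ ∈ F` through the pushout of `A₁ ← M → B₁`, using that `F = (C ∩ W)^⊥` is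
closed under extensions and under cokernels of inflations between its objects, and that every
object has an inflation into `F`.
-/

namespace CotorsionPaper

variable {A : Type u} [Category.{v} A] [Preadditive A] {E : ExactStruct A}

lemma CosyzOf.mono {Y Y' : Set A} (h : Y ⊆ Y') :
    ∀ {n : ℕ} {C M : A}, CosyzOf E Y n C M → CosyzOf E Y' n C M
  | 0, _, _, hM => hM
  | _ + 1, _, _, ⟨C', Y₀, f, g, hY₀, hfg, hC'⟩ => ⟨C', Y₀, f, g, h hY₀, hfg, hC'.mono h⟩

lemma CosyzOf.mem_of_mem {W Y : Set A} (hW : E.IsThick W) (hYW : Y ⊆ W) :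
    ∀ {n : ℕ} {C M : A}, CosyzOf E Y n C M → C ∈ W → M ∈ W
  | 0, _, _, ⟨e⟩, hC => hW.1 e.hom e.inv e.hom_inv_id hC
  | _ + 1, _, _, ⟨_, _, _, _, hY₀, hfg, hC'⟩, hC =>
    (hW.2 hfg).2.2 (hYW hY₀) (hC'.mem_of_mem hW hYW hC)

noncomputable def isColimitCokernelCoforkOfIsPushout {X Y X' Y' Z : A} {f : X ⟶ Y}
    {u : X ⟶ X'} {v : Y ⟶ Y'} {f' : X' ⟶ Y'} (sq : IsPushout f u v f') {π : Y ⟶ Z}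
    {w : f ≫ π = 0} (hπ : IsColimit (CokernelCofork.ofπ π w)) :
    IsColimit (CokernelCofork.ofπ (sq.desc π 0 (by rw [w, comp_zero])) (sq.inr_desc _ _ _)) :=
  CokernelCofork.IsColimit.ofπ _ _
    (fun k hk => (CokernelCofork.IsColimit.desc' hπ (v ≫ k)
      (by rw [← Category.assoc, sq.w, Category.assoc, hk, comp_zero])).1)
    (fun k hk => sq.hom_ext
      (by rw [sq.inl_desc_assoc]; exact (CokernelCofork.IsColimit.desc' hπ _ _).2)
      (by rw [sq.inr_desc_assoc, zero_comp, hk]))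
    (fun k hk m hm => Cofork.IsColimit.hom_ext hπ <|
      (by rw [← hm, sq.inl_desc_assoc] : π ≫ m = v ≫ k).trans
        (CokernelCofork.IsColimit.desc' hπ _ _).2.symm)

noncomputable def isLimitKernelForkOfIsPullback {Y Z Y' Z' K : A} {g : Y ⟶ Z}
    {u : Z' ⟶ Z} {v : Y' ⟶ Y} {g' : Y' ⟶ Z'} (sq : IsPullback g' v u g) {ι : K ⟶ Y}
    {w : ι ≫ g = 0} (hι : IsLimit (KernelFork.ofι ι w)) :
    IsLimit (KernelFork.ofι (sq.lift 0 ι (by rw [w, zero_comp])) (sq.lift_fst _ _ _)) :=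
  KernelFork.IsLimit.ofι _ _
    (fun k hk => (KernelFork.IsLimit.lift' hι (k ≫ v)
      (by rw [Category.assoc, ← sq.w, ← Category.assoc, hk, zero_comp])).1)
    (fun k hk => sq.hom_ext
      (by rw [Category.assoc, sq.lift_fst, comp_zero, hk])
      (by rw [Category.assoc, sq.lift_snd]; exact (KernelFork.IsLimit.lift' hι _ _).2))
    (fun k hk m hm => Fork.IsLimit.hom_ext hι <|
      (by rw [← hm, Category.assoc, sq.lift_snd] : m ≫ ι = k ≫ v).trans
        (KernelFork.IsLimit.lift' hι _ _).2.symm)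

namespace ExactStruct

namespace IsExactCategory

variable {X Y Z : A} {f : X ⟶ Y} {g : Y ⟶ Z}

lemma exists_desc (hE : E.IsExactCategory) (h : E.IsConflation f g) {T : A} (k : Y ⟶ T)
    (hk : f ≫ k = 0) : ∃ d : Z ⟶ T, g ≫ d = k :=
  let ⟨hg⟩ := hE.isCokernel h
  ⟨_, (CokernelCofork.IsColimit.desc' hg k hk).2⟩

lemma isConflation_of_isColimit (hE : E.IsExactCategory) (h : E.IsConflation f g) {Z' : A}
    {g' : Y ⟶ Z'} {w : f ≫ g' = 0} (hg' : IsColimit (CokernelCofork.ofπ g' w)) :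
    E.IsConflation f g' :=
  let ⟨hg⟩ := hE.isCokernel h
  hE.conflation_of_iso (Iso.refl X) (Iso.refl Y) (hg.coconePointUniqueUpToIso hg') h (by simp)
    (by simpa using (hg.comp_coconePointUniqueUpToIso_hom hg' WalkingParallelPair.one).symm)

lemma isConflation_of_isLimit (hE : E.IsExactCategory) (h : E.IsConflation f g) {X' : A}
    {f' : X' ⟶ Y} {w : f' ≫ g = 0} (hf' : IsLimit (KernelFork.ofι f' w)) :
    E.IsConflation f' g :=
  let ⟨hf⟩ := hE.isKernel h
  hE.conflation_of_iso (hf.conePointUniqueUpToIso hf') (Iso.refl Y) (Iso.refl Z) h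
    (by simpa using hf.conePointUniqueUpToIso_hom_comp hf' WalkingParallelPair.zero) (by simp)

lemma isConflation_comp_iso_right (hE : E.IsExactCategory) (h : E.IsConflation f g) {Z' : A}
    (e : Z ≅ Z') : E.IsConflation f (g ≫ e.hom) :=
  hE.conflation_of_iso (Iso.refl X) (Iso.refl Y) e h (by simp) (by simp)

lemma isConflation_comp_iso_mid (hE : E.IsExactCategory) (h : E.IsConflation f g) {Y' : A}
    (e : Y ≅ Y') : E.IsConflation (f ≫ e.hom) (e.inv ≫ g) :=
  hE.conflation_of_iso (Iso.refl X) e (Iso.refl Z) h (by simp) (by simp)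

lemma inflation_of_isPushout (hE : E.IsExactCategory) (hf : E.Inflation f) {X' Y' : A}
    {u : X ⟶ X'} {v : Y ⟶ Y'} {f' : X' ⟶ Y'} (sq : IsPushout f u v f') : E.Inflation f' := by
  obtain ⟨_, f₁, _, ⟨_, g₁, hc⟩, sq₁⟩ := hE.inflation_pushout u hf
  have := hE.isConflation_comp_iso_mid hc (sq₁.isoIsPushout _ _ sq)
  rw [IsPushout.inr_isoIsPushout_hom] at this
  exact ⟨_, _, this⟩

lemma exists_isConflation_of_isPushout (hE : E.IsExactCategory) (h : E.IsConflation f g)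
    {X' Y' : A} {u : X ⟶ X'} {v : Y ⟶ Y'} {f' : X' ⟶ Y'} (sq : IsPushout f u v f') :
    ∃ g' : Y' ⟶ Z, E.IsConflation f' g' ∧ v ≫ g' = g := by
  obtain ⟨_, _, hc'⟩ := hE.inflation_of_isPushout ⟨_, _, h⟩ sq
  obtain ⟨hg⟩ := hE.isCokernel h
  exact ⟨_, hE.isConflation_of_isColimit hc' (isColimitCokernelCoforkOfIsPushout sq hg),
    sq.inl_desc _ _ _⟩

lemma exists_isConflation_pullback (hE : E.IsExactCategory) (h : E.IsConflation f g) {Z' : A}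
    (u : Z' ⟶ Z) : ∃ (Y' : A) (f' : X ⟶ Y') (v : Y' ⟶ Y) (g' : Y' ⟶ Z'),
      E.IsConflation f' g' ∧ g' ≫ u = v ≫ g := by
  obtain ⟨Y', g', v, ⟨_, _, hc'⟩, sq⟩ := hE.deflation_pullback u ⟨_, _, h⟩
  obtain ⟨hf⟩ := hE.isKernel h
  exact ⟨Y', _, v, g', hE.isConflation_of_isLimit hc' (isLimitKernelForkOfIsPullback sq hf), sq.w⟩

/-- `P` is the pushout of `fA` and `fB`. -/
lemma exists_isConflation_of_isConflation_pair (hE : E.IsExactCategory) {M A₁ A₂ B₁ B₂ : A}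
    {fA : M ⟶ A₁} {gA : A₁ ⟶ A₂} {fB : M ⟶ B₁} {gB : B₁ ⟶ B₂}
    (hA : E.IsConflation fA gA) (hB : E.IsConflation fB gB) :
    ∃ (P : A) (i : B₁ ⟶ P) (p : P ⟶ A₂) (j : A₁ ⟶ P) (q : P ⟶ B₂),
      E.IsConflation i p ∧ E.IsConflation j q := by
  obtain ⟨P, i, j, -, sq⟩ := hE.inflation_pushout fB ⟨_, _, hA⟩
  obtain ⟨p, hip, -⟩ := hE.exists_isConflation_of_isPushout hA sq
  obtain ⟨q, hjq, -⟩ := hE.exists_isConflation_of_isPushout hB sq.flip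
  exact ⟨P, i, p, j, q, hip, hjq⟩

/-- Noether isomorphism: for inflations `B ↣ P ↣ Y₀` there is a conflation
`P/B ↣ Y₀/B ↠ Y₀/P`. -/
lemma exists_isConflation_cokernels (hE : E.IsExactCategory) {B P A₀ Y₀ X₀ : A}
    {i : B ⟶ P} {p : P ⟶ A₀} {j : P ⟶ Y₀} {q : Y₀ ⟶ X₀}
    (h₁ : E.IsConflation i p) (h₂ : E.IsConflation j q) :
    ∃ (Q : A) (ρ : Y₀ ⟶ Q) (a : A₀ ⟶ Q) (b : Q ⟶ X₀),
      E.IsConflation (i ≫ j) ρ ∧ E.IsConflation a b ∧ ρ ≫ b = q := by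
  obtain ⟨Q, ρ, hρ⟩ := hE.inflation_comp ⟨_, _, h₁⟩ ⟨_, _, h₂⟩
  obtain ⟨hp⟩ := hE.isCokernel h₁
  obtain ⟨hρ'⟩ := hE.isCokernel hρ
  obtain ⟨a, ha⟩ := hE.exists_desc h₁ (j ≫ ρ) (by
    rw [← Category.assoc]; exact hE.comp_zero hρ)
  have desc (s : PushoutCocone p j) : { d : Q ⟶ s.pt // ρ ≫ d = s.inr } :=
    CokernelCofork.IsColimit.desc' hρ' s.inr (by
      rw [Category.assoc, ← s.condition, ← Category.assoc, hE.comp_zero h₁, zero_comp])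
  have sq : IsPushout p j a ρ := .of_isColimit <| PushoutCocone.IsColimit.mk ha
    (fun s => (desc s).1)
    (fun s => Cofork.IsColimit.hom_ext hp <| by
      show p ≫ a ≫ _ = p ≫ s.inl
      rw [reassoc_of% ha, (desc s).2, s.condition])
    (fun s => (desc s).2)
    (fun s m _ hm => Cofork.IsColimit.hom_ext hρ' (hm.trans (desc s).2.symm))
  obtain ⟨b, hab, hb⟩ := hE.exists_isConflation_of_isPushout h₂ sq.flip
  exact ⟨Q, ρ, a, b, hρ, hab, hb⟩

lemma ext1Zero_of_isConflation (hE : E.IsExactCategory) {L M₁ M M₂ : A} {i : M₁ ⟶ M}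
    {p : M ⟶ M₂} (hc : E.IsConflation i p) (h₁ : E.Ext1Zero L M₁) (h₂ : E.Ext1Zero L M₂) :
    E.Ext1Zero L M := by
  intro N f g hfg
  obtain ⟨_, _, _, b, hρ, hab, hb⟩ := hE.exists_isConflation_cokernels hc hfg
  obtain ⟨σ, hσ⟩ := h₂ hab
  obtain ⟨_, _, v, _, hc', hsq⟩ := hE.exists_isConflation_pullback hρ σ
  obtain ⟨τ, hτ⟩ := h₁ hc'
  refine ⟨τ ≫ v, ?_⟩
  rw [Category.assoc, ← hb, reassoc_of% hsq.symm, hσ, Category.comp_id, hτ]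

lemma mem_rightPerp_of_isConflation (hE : E.IsExactCategory) {X : Set A} {M₁ M M₂ : A}
    {i : M₁ ⟶ M} {p : M ⟶ M₂} (hc : E.IsConflation i p) (h₁ : M₁ ∈ E.rightPerp X)
    (h₂ : M₂ ∈ E.rightPerp X) : M ∈ E.rightPerp X :=
  fun L hL => hE.ext1Zero_of_isConflation hc (h₁ L hL) (h₂ L hL)

end IsExactCategory

variable (E) in
def CokernelClosed (Y : Set A) : Prop :=
  ∀ ⦃K B C : A⦄ ⦃f : K ⟶ B⦄ ⦃g : B ⟶ C⦄, E.IsConflation f g → K ∈ Y → B ∈ Y → C ∈ Y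

variable (E) in
def Cogenerating (Y : Set A) : Prop :=
  ∀ M : A, ∃ (I Q : A) (f : M ⟶ I) (g : I ⟶ Q), I ∈ Y ∧ E.IsConflation f g

lemma IsCompleteCP.cogenerating {X Y : Set A} (h : E.IsCompleteCP X Y) : E.Cogenerating Y :=
  fun M => let ⟨I, Q, f, g, hI, _, hfg⟩ := h.2.2 M; ⟨I, Q, f, g, hI, hfg⟩

lemma idLE.mono {Y Y' : Set A} (h : Y ⊆ Y') {n : ℕ} {M : A} :
    E.idLE Y n M → E.idLE Y' n M :=
  fun ⟨C, hC, hcos⟩ => ⟨C, h hC, hcos.mono h⟩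

lemma idLE.mem_of_subset {W Y : Set A} (hW : E.IsThick W) (hYW : Y ⊆ W) {n : ℕ} {M : A} :
    E.idLE Y n M → M ∈ W :=
  fun ⟨_, hC, hcos⟩ => hcos.mem_of_mem hW hYW (hYW hC)

lemma idLE.succ_of_isConflation {Y : Set A} {n : ℕ} {M I M₁ : A} {i : M ⟶ I} {q : I ⟶ M₁}
    (h : E.idLE Y n M₁) (hI : I ∈ Y) (hiq : E.IsConflation i q) : E.idLE Y (n + 1) M :=
  let ⟨C, hC, hcos⟩ := h
  ⟨C, hC, M₁, I, i, q, hI, hiq, hcos⟩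

lemma idim_le_iff {Y : Set A} {M : A} {n : ℕ} :
    E.idim Y M ≤ n ↔ ∃ m ≤ n, E.idLE Y m M := by
  rw [idim, ← ENat.lt_add_one_iff (ENat.natCast_ne_top n), sInf_lt_iff, Set.exists_mem_image]
  simp only [Set.mem_ofPred_eq, ← Nat.cast_add_one, Nat.cast_lt, Nat.lt_succ_iff, and_comm]

section DimensionShifting

variable {X Y : Set A}

lemma idLE_right_of_isConflation (hE : E.IsExactCategory) (hY : E.CokernelClosed Y) :
    ∀ (n : ℕ) {T P Q : A} {t : T ⟶ P} {p : P ⟶ Q},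
      E.IsConflation t p → T ∈ Y → E.idLE Y n P → E.idLE Y n Q
  | 0, _, _, Q, _, _, hc, hT, ⟨_, hC, ⟨e⟩⟩ =>
    ⟨Q, hY (hE.isConflation_comp_iso_mid hc e) hT hC, ⟨Iso.refl Q⟩⟩
  | _ + 1, _, _, _, _, _, hc, hT, ⟨C, hC, _, _, _, _, hY₀, hfg, hcos⟩ =>
    let ⟨_, _, _, _, hTY₀, hab, _⟩ := hE.exists_isConflation_cokernels hc hfg
    idLE.succ_of_isConflation ⟨C, hC, hcos⟩ (hY hTY₀ hT hY₀) hab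

lemma idLE_mid_of_isConflation (hE : E.IsExactCategory) (hXY : E.rightPerp X = Y)
    (hY : E.CokernelClosed Y) (hcog : E.Cogenerating Y) :
    ∀ (n : ℕ) {T P Q : A} {t : T ⟶ P} {p : P ⟶ Q},
      E.IsConflation t p → T ∈ Y → E.idLE Y n Q → E.idLE Y n P
  | 0, _, P, _, _, _, hc, hT, ⟨_, hC, ⟨e⟩⟩ => by
    subst hXY
    exact ⟨P, hE.mem_rightPerp_of_isConflation (hE.isConflation_comp_iso_right hc e) hT hC,
      ⟨Iso.refl P⟩⟩
  | n + 1, _, P, _, _, _, hc, hT, ⟨C, hC, _, _, _, _, hY₀, hfg, hcos⟩ => by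
    -- for `P ↣ I ↠ P₁` with `I ∈ Y`, Noether gives `Q ↣ I/T ↠ P₁` with `I/T ∈ Y`; pushing it
    -- out against `Q ↣ Y₀ ↠ Q₁` bounds the dimension of `P₁` by that of `Q₁`
    obtain ⟨I, _, _, _, hI, hiq⟩ := hcog P
    obtain ⟨_, _, _, _, hTI, hab, -⟩ := hE.exists_isConflation_cokernels hc hiq
    obtain ⟨_, _, _, _, _, hR, hY₀R⟩ := hE.exists_isConflation_of_isConflation_pair hfg hab
    have := idLE_mid_of_isConflation hE hXY hY hcog n hR (hY hTI hT hI) ⟨C, hC, hcos⟩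
    exact (idLE_right_of_isConflation hE hY n hY₀R hY₀ this).succ_of_isConflation hI hiq

lemma idLE_of_isConflation_pair (hE : E.IsExactCategory) (hXY : E.rightPerp X = Y)
    (hY : E.CokernelClosed Y) (hcog : E.Cogenerating Y) (n : ℕ) {M A₁ A₂ B₁ B₂ : A}
    {fA : M ⟶ A₁} {gA : A₁ ⟶ A₂} {fB : M ⟶ B₁} {gB : B₁ ⟶ B₂}
    (hA : E.IsConflation fA gA) (hB : E.IsConflation fB gB) (hA₁ : A₁ ∈ Y) (hB₁ : B₁ ∈ Y)
    (h : E.idLE Y n A₂) : E.idLE Y n B₂ :=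
  let ⟨_, _, _, _, _, hip, hjq⟩ := hE.exists_isConflation_of_isConflation_pair hA hB
  idLE_right_of_isConflation hE hY n hjq hA₁ (idLE_mid_of_isConflation hE hXY hY hcog n hip hB₁ h)

lemma idLE_inter_of_idLE {W : Set A} (hE : E.IsExactCategory) (hXY : E.rightPerp X = Y)
    (hY : E.CokernelClosed Y) (hcog : E.Cogenerating Y) (hW : E.IsThick W)
    (hWY : E.Cogenerating (W ∩ Y)) :
    ∀ (n : ℕ) {M : A}, M ∈ W → E.idLE Y n M → E.idLE (W ∩ Y) n M
  | 0, _, hM, ⟨C, hC, ⟨e⟩⟩ => ⟨C, ⟨hW.1 e.inv e.hom e.inv_hom_id hM, hC⟩, ⟨e⟩⟩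
  | n + 1, M, hM, ⟨C, hC, _, _, _, _, hY₀, hfg, hcos⟩ =>
    let ⟨_, _, _, _, hT, hiq⟩ := hWY M
    have hM' := idLE_of_isConflation_pair hE hXY hY hcog n hfg hiq hY₀ hT.2 ⟨C, hC, hcos⟩
    (idLE_inter_of_idLE hE hXY hY hcog hW hWY n ((hW.2 hiq).1 hM hT.1) hM').succ_of_isConflation
      hT hiq

end DimensionShifting

end ExactStruct

theorem statement7_general {A : Type u} [Category.{v} A] [Preadditive A]
    (E : ExactStruct A) (hE : E.IsExactCategory)
    (C W F : Set A)
    (hH : E.IsHereditaryHoveyTriple C W F) :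
    ∀ n : ℕ, W ∩ E.idSet F n = E.idSet (W ∩ F) n := by
  obtain ⟨⟨hF, hWF, hW⟩, ⟨-, hFcok⟩, -⟩ := hH
  intro n
  ext M
  simp only [Set.mem_inter_iff, ExactStruct.idSet, Set.mem_ofPred_eq, ExactStruct.idim_le_iff]
  constructor
  · rintro ⟨hM, m, hmn, hm⟩
    exact ⟨m, hmn, ExactStruct.idLE_inter_of_idLE hE hF.1.1 hFcok hF.cogenerating hW
      hWF.cogenerating m hM hm⟩
  · rintro ⟨m, hmn, hm⟩
    exact ⟨hm.mem_of_subset hW Set.inter_subset_left, m, hmn, hm.mono Set.inter_subset_right⟩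

/-- For a hereditary Hovey triple `(C, W, F)` in a WIC exact category
with enough projectives and injectives, `W ∩ F_n = (W ∩ F)_n` for all `n ≥ 0`. -/
theorem statement7 {A : Type u} [Category.{v} A] [Preadditive A]
    (E : ExactStruct A) (hE : E.IsExactCategory) (hwic : WIC A)
    (hproj : E.EnoughProjectives) (hinj : E.EnoughInjectives)
    (C W F : Set A)
    (hH : E.IsHereditaryHoveyTriple C W F) :
    ∀ n : ℕ, W ∩ E.idSet F n = E.idSet (W ∩ F) n :=
  statement7_general E hE C W F hH

end CotorsionPaper
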